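/- In G'', after the pruning, the DAG of profile-equivalence classes forms a leafless tree whose width is monotonically non-decreasing and bounded by n; hence there exists a stabilization level j after which each equivalence class has exactly one child class. -/

import Mathlib

/-- Strict lexicographic order on finite 0-1 profiles. -/
def ProfLt (a b : List Bool) : Prop := List.Lex (· < ·) a b

/-- Non-strict lexicographic order on finite 0-1 profiles. -/
def ProfLe (a b : List Bool) : Prop := a = b ∨ ProfLt a b

/-- A nondeterministic Büchi automaton on infinite words. -/
structure NBW (Q : Type) (σ : Type) where
  init : Set Q
  trans : Q → σ → Set Q
  acc : Q → Bool

namespace NBW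

variable {Q σ : Type} (A : NBW Q σ) (w : ℕ → σ)

/-- `(q,i)` is a vertex of the run DAG of `A` on `w`. -/
def InDag (v : Q × ℕ) : Prop :=
  ∃ p : ℕ → Q, p 0 ∈ A.init ∧ (∀ j, j < v.2 → p (j + 1) ∈ A.trans (p j) (w j)) ∧ p v.2 = v.1

/-- Edge of the run DAG. -/
def Edge (u v : Q × ℕ) : Prop :=
  A.InDag w u ∧ v.2 = u.2 + 1 ∧ v.1 ∈ A.trans u.1 (w u.2)

/-- An infinite initial path through the (sub-)DAG with edge relation `E`. -/
def IsPath (E : Q × ℕ → Q × ℕ → Prop) (π : ℕ → Q × ℕ) : Prop :=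
  (π 0).1 ∈ A.init ∧ (π 0).2 = 0 ∧ ∀ i, E (π i) (π (i + 1))

/-- An accepting path: initial and visiting F-nodes infinitely often. -/
def AcceptingPath (E : Q × ℕ → Q × ℕ → Prop) (π : ℕ → Q × ℕ) : Prop :=
  A.IsPath E π ∧ ∀ N, ∃ i, N ≤ i ∧ A.acc (π i).1 = true

/-- Profile (sequence of acceptance labels) of the first `i+1` states of `p`. -/
def profileOf (p : ℕ → Q) (i : ℕ) : List Bool :=
  (List.range (i + 1)).map fun j => A.acc (p j)

/-- `p` encodes a finite initial run ending at node `v`. -/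
def FinRunTo (p : ℕ → Q) (v : Q × ℕ) : Prop :=
  p 0 ∈ A.init ∧ (∀ j, j < v.2 → p (j + 1) ∈ A.trans (p j) (w j)) ∧ p v.2 = v.1

/-- `h` assigns to each node the lexicographically maximal profile
over all finite initial runs to it. -/
def IsProfileFun (h : Q × ℕ → List Bool) : Prop :=
  ∀ v, A.InDag w v →
    (∃ p, A.FinRunTo w p v ∧ A.profileOf p v.2 = h v) ∧
    ∀ p, A.FinRunTo w p v → ProfLe (A.profileOf p v.2) (h v)

/-- Edges of the pruned DAG `G'`: only edges from predecessors of
lexicographically maximal profile are kept. -/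
def Edge' (h : Q × ℕ → List Bool) (u v : Q × ℕ) : Prop :=
  A.Edge w u v ∧ ∀ u', A.Edge w u' v → ¬ ProfLt (h u) (h u')

/-- `v` is finite in `G'`: it has finitely many descendants in `G'`. -/
def FiniteIn' (h : Q × ℕ → List Bool) (v : Q × ℕ) : Prop :=
  Set.Finite {u | Relation.ReflTransGen (A.Edge' w h) v u}

/-- Vertices of `G''`: vertices of the run DAG that are not finite in `G'`. -/
def InDag'' (h : Q × ℕ → List Bool) (v : Q × ℕ) : Prop :=
  A.InDag w v ∧ ¬ A.FiniteIn' w h v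

/-- Edges of `G''`. -/
def Edge'' (h : Q × ℕ → List Bool) (u v : Q × ℕ) : Prop :=
  A.Edge' w h u v ∧ A.InDag'' w h u ∧ A.InDag'' w h v

/-- `lam` is the retrospective labeling `λ^k`: ⊤ at levels ≤ k, ⊥ on F-nodes
after level k, inherited along `G'`-edges otherwise. -/
def IsRetroLabeling (h : Q × ℕ → List Bool) (k : ℕ) (lam : Q × ℕ → Bool) : Prop :=
  (∀ u, A.InDag w u → u.2 ≤ k → lam u = true) ∧
  (∀ u, A.InDag w u → k < u.2 → A.acc u.1 = true → lam u = false) ∧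
  (∀ u v, k < v.2 → A.acc v.1 = false → A.Edge' w h u v → lam v = lam u)

/-- A labeling is legal when every ⊥-labeled node is finite in `G'`. -/
def Legal (h : Q × ℕ → List Bool) (lam : Q × ℕ → Bool) : Prop :=
  ∀ u, A.InDag w u → lam u = false → A.FiniteIn' w h u

/-- `α(u)`: the number of ⊤-labeled profile-equivalence classes on `u`'s level
whose profile is strictly greater than `h u`. -/
noncomputable def alphaCount (h : Q × ℕ → List Bool) (lam : Q × ℕ → Bool) (u : Q × ℕ) : ℕ :=
  Set.ncard {p : List Bool | ∃ v, A.InDag w v ∧ v.2 = u.2 ∧ lam v = true ∧ h v = p ∧ ProfLt (h u) p}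

/-- The `k`-retrospective ranking (with top rank `m`). -/
noncomputable def retroRank (h : Q × ℕ → List Bool) (lam : Q × ℕ → Bool) (k m : ℕ)
    (u : Q × ℕ) : ℕ :=
  if u.2 ≤ k then m
  else if lam u then 2 * A.alphaCount w h lam u + 1 else 2 * A.alphaCount w h lam u

/-- `m = 2 |Q \ F|`. -/
def mBound [Fintype Q] : ℕ :=
  2 * Finset.card (Finset.univ.filter fun q => A.acc q = false)

end NBW

/-! The profile `h` of a node is the maximal profile of a run reaching it, so along a pruned edge
`u → v` it grows by one letter: `h v = h u ++ [acc v]`. Hence each class at level `i` of `G''`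
has its child classes among its one-letter extensions, every class has one (an infinite node of the
finitely branching `G'` has an infinite child), and truncating the last letter maps the classes at
level `i + 1` onto those at level `i`. The widths therefore increase, are bounded by the `n`
profiles `h (q, i)`, and so stabilize; once they do, truncation is injective, which is exactly
uniqueness of the child class. -/

theorem profLe_iff_le {a b : List Bool} : ProfLe a b ↔ a ≤ b :=
  le_iff_eq_or_lt.symm

theorem List.Lex.append_of_length_eq {α : Type*} {r : α → α → Prop} {a b : List α}
    (hab : List.Lex r a b) (hlen : a.length = b.length) (l : List α) :
    List.Lex r (a ++ l) (b ++ l) := by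
  induction hab with
  | nil => simp at hlen
  | rel hr => exact List.Lex.rel hr
  | cons _ ih => exact List.Lex.cons (ih (by simpa using hlen))

theorem List.append_le_append_of_length_eq {α : Type*} [LinearOrder α] {a b : List α}
    (hab : a ≤ b) (hlen : a.length = b.length) (l : List α) : a ++ l ≤ b ++ l := by
  rcases hab.eq_or_lt with rfl | hlt
  · rfl
  · exact le_of_lt (List.Lex.append_of_length_eq hlt hlen l)

theorem Relation.finite_setOf_reflTransGen {α : Type*} {r : α → α → Prop} {a : α}
    (hsucc : {b | r a b}.Finite) (hdesc : ∀ b, r a b → {c | ReflTransGen r b c}.Finite) :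
    {c | ReflTransGen r a c}.Finite := by
  refine ((hsucc.biUnion hdesc).insert a).subset fun c hc => ?_
  rcases ReflTransGen.cases_head_iff.mp hc with rfl | ⟨b, hab, hbc⟩
  · exact Set.mem_insert _ _
  · exact Set.mem_insert_of_mem _ (Set.mem_biUnion hab hbc)

theorem Set.ncard_le_ncard_of_subset_image {α β : Type*} {f : α → β} {s : Set β} {t : Set α}
    (ht : t.Finite) (hst : s ⊆ f '' t) : s.ncard ≤ t.ncard :=
  (Set.ncard_le_ncard hst (ht.image f)).trans (Set.ncard_image_le ht)

theorem Set.injOn_of_subset_image_of_ncard_le {α β : Type*} {f : α → β} {s : Set β} {t : Set α}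
    (ht : t.Finite) (hst : s ⊆ f '' t) (hcard : t.ncard ≤ s.ncard) : Set.InjOn f t :=
  Set.injOn_of_ncard_image_eq
    (le_antisymm (Set.ncard_image_le ht) (hcard.trans (Set.ncard_le_ncard hst (ht.image f)))) ht

theorem Nat.exists_forall_ge_eq_of_monotone {f : ℕ → ℕ} {b : ℕ} (hf : Monotone f)
    (hb : ∀ n, f n ≤ b) : ∃ j, ∀ k, j ≤ k → f k = f j := by
  have hbdd : BddAbove (Set.range f) := ⟨b, by rintro _ ⟨n, rfl⟩; exact hb n⟩
  obtain ⟨j, hj⟩ := Nat.sSup_mem (Set.range_nonempty f) hbdd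
  exact ⟨j, fun k hk => le_antisymm (hj ▸ le_csSup hbdd ⟨k, rfl⟩) (hf hk)⟩

namespace NBW

variable {Q σ : Type} (A : NBW Q σ) (w : ℕ → σ)

theorem profileOf_length (p : ℕ → Q) (i : ℕ) : (A.profileOf p i).length = i + 1 := by
  simp [profileOf]

theorem profileOf_congr {p p' : ℕ → Q} {i : ℕ} (hpp : ∀ j ≤ i, p j = p' j) :
    A.profileOf p i = A.profileOf p' i :=
  List.map_congr_left fun j hj => congrArg A.acc (hpp j (Nat.lt_succ_iff.mp (List.mem_range.mp hj)))

theorem profileOf_succ (p : ℕ → Q) (i : ℕ) :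
    A.profileOf p (i + 1) = A.profileOf p i ++ [A.acc (p (i + 1))] := by
  simp only [profileOf, List.range_succ, List.map_append, List.map_singleton]

theorem profileOf_update_succ (p : ℕ → Q) (i : ℕ) (q : Q) :
    A.profileOf (Function.update p (i + 1) q) (i + 1) = A.profileOf p i ++ [A.acc q] := by
  rw [profileOf_succ, Function.update_self,
    A.profileOf_congr fun j hj => Function.update_of_ne (by omega) _ _]

variable {A w}

theorem FinRunTo.inDag {p : ℕ → Q} {v : Q × ℕ} (hp : A.FinRunTo w p v) : A.InDag w v :=
  ⟨p, hp⟩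

theorem FinRunTo.update_succ {p : ℕ → Q} {u : Q × ℕ} {q : Q} (hp : A.FinRunTo w p u)
    (hq : q ∈ A.trans u.1 (w u.2)) :
    A.FinRunTo w (Function.update p (u.2 + 1) q) (q, u.2 + 1) := by
  have hpre : ∀ j ≤ u.2, Function.update p (u.2 + 1) q j = p j :=
    fun j hj => Function.update_of_ne (by omega) _ _
  refine ⟨by rw [hpre 0 (Nat.zero_le _)]; exact hp.1, fun j hj => ?_, Function.update_self _ _ _⟩
  rcases Nat.lt_or_ge j u.2 with hlt | hge
  · rw [hpre j hlt.le, hpre (j + 1) hlt]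
    exact hp.2.1 j hlt
  · have hj' : j = u.2 := by simp only at hj; omega
    rw [hj', hpre u.2 le_rfl, Function.update_self, hp.2.2]
    exact hq

theorem FinRunTo.edge_of_succ {p : ℕ → Q} {v : Q × ℕ} {k : ℕ} (hp : A.FinRunTo w p v)
    (hk : v.2 = k + 1) : A.FinRunTo w p (p k, k) ∧ A.Edge w (p k, k) v := by
  have hpre : A.FinRunTo w p (p k, k) := ⟨hp.1, fun j hj => hp.2.1 j (by simp at hj; omega), rfl⟩
  refine ⟨hpre, hpre.inDag, hk, ?_⟩
  rw [← hp.2.2, hk]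
  exact hp.2.1 k (by omega)

theorem Edge.inDag_right {u v : Q × ℕ} (hE : A.Edge w u v) : A.InDag w v := by
  obtain ⟨⟨p, hp⟩, hv2, hq⟩ := hE
  have hp : A.FinRunTo w p u := hp
  have hv : v = (v.1, u.2 + 1) := Prod.ext rfl hv2
  exact hv ▸ (hp.update_succ hq).inDag

variable {h : Q × ℕ → List Bool}

theorem IsProfileFun.length_eq (hprof : A.IsProfileFun w h) {u : Q × ℕ} (hu : A.InDag w u) :
    (h u).length = u.2 + 1 := by
  obtain ⟨⟨p, -, hp⟩, -⟩ := hprof u hu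
  rw [← hp, profileOf_length]

theorem IsProfileFun.profileOf_le (hprof : A.IsProfileFun w h) {p : ℕ → Q} {v : Q × ℕ}
    (hp : A.FinRunTo w p v) : A.profileOf p v.2 ≤ h v :=
  profLe_iff_le.mp ((hprof v hp.inDag).2 p hp)

theorem IsProfileFun.append_le_of_edge (hprof : A.IsProfileFun w h) {u v : Q × ℕ}
    (hE : A.Edge w u v) : h u ++ [A.acc v.1] ≤ h v := by
  obtain ⟨⟨p, hp, hpu⟩, -⟩ := hprof u hE.1
  have hv : v = (v.1, u.2 + 1) := Prod.ext rfl hE.2.1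
  have hle := hprof.profileOf_le (hp.update_succ hE.2.2)
  rwa [profileOf_update_succ, hpu, ← hv] at hle

/-- A best run to `v` passes through some parent `u'`, whose profile is at most `h u` because `G'`
keeps the edge from `u`. -/
theorem IsProfileFun.eq_append_of_edge' (hprof : A.IsProfileFun w h) {u v : Q × ℕ}
    (hE : A.Edge' w h u v) : h v = h u ++ [A.acc v.1] := by
  refine le_antisymm ?_ (hprof.append_le_of_edge hE.1)
  obtain ⟨⟨p, hp, hpv⟩, -⟩ := hprof v hE.1.inDag_right
  obtain ⟨hp', hE'⟩ := hp.edge_of_succ hE.1.2.1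
  have hle : A.profileOf p u.2 ≤ h u :=
    (hprof.profileOf_le hp').trans (not_lt.mp (hE.2 _ hE'))
  have hlen : (A.profileOf p u.2).length = (h u).length := by
    rw [profileOf_length, hprof.length_eq hE.1.1]
  rw [← hpv, hE.1.2.1, profileOf_succ, ← hE.1.2.1, hp.2.2]
  exact List.append_le_append_of_length_eq hle hlen _

theorem exists_edge''_of_inDag'' [Finite Q] {u : Q × ℕ} (hu : A.InDag'' w h u) :
    ∃ v, A.Edge'' w h u v := by
  by_contra! hleaf
  refine hu.2 (Relation.finite_setOf_reflTransGen ?_ fun v hE => ?_)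
  · refine (Set.finite_range fun q : Q => (q, u.2 + 1)).subset fun v hE => ⟨v.1, ?_⟩
    exact Prod.ext rfl hE.1.2.1.symm
  · by_contra hinf
    exact hleaf v ⟨hE, hu, hE.1.inDag_right, hinf⟩

variable (A w h)

def classesAt (i : ℕ) : Set (List Bool) :=
  {p | ∃ u, A.InDag'' w h u ∧ u.2 = i ∧ h u = p}

theorem classesAt_subset_range (i : ℕ) : A.classesAt w h i ⊆ Set.range fun q : Q => h (q, i) := by
  rintro _ ⟨u, -, rfl, rfl⟩
  exact ⟨u.1, rfl⟩

theorem classesAt_finite [Finite Q] (i : ℕ) : (A.classesAt w h i).Finite :=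
  (Set.finite_range _).subset (A.classesAt_subset_range w h i)

theorem ncard_classesAt_le_card [Fintype Q] (i : ℕ) :
    (A.classesAt w h i).ncard ≤ Fintype.card Q :=
  calc (A.classesAt w h i).ncard ≤ (Set.range fun q : Q => h (q, i)).ncard :=
        Set.ncard_le_ncard (A.classesAt_subset_range w h i) (Set.finite_range _)
    _ ≤ (Set.univ : Set Q).ncard := by
        rw [← Set.image_univ]
        exact Set.ncard_image_le Set.finite_univ
    _ = Fintype.card Q := by rw [Set.ncard_univ, Nat.card_eq_fintype_card]

variable {A w h}

theorem dropLast_mem_classesAt_of_edge'' (hprof : A.IsProfileFun w h) {u v : Q × ℕ}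
    (hE : A.Edge'' w h u v) : h v ∈ A.classesAt w h (u.2 + 1) ∧ (h v).dropLast = h u := by
  refine ⟨⟨v, hE.2.2, hE.1.1.2.1, rfl⟩, ?_⟩
  rw [hprof.eq_append_of_edge' hE.1, List.dropLast_concat]

theorem classesAt_subset_image_dropLast [Finite Q] (hprof : A.IsProfileFun w h) (i : ℕ) :
    A.classesAt w h i ⊆ List.dropLast '' A.classesAt w h (i + 1) := by
  rintro _ ⟨u, hu, rfl, rfl⟩
  obtain ⟨v, hE⟩ := exists_edge''_of_inDag'' hu
  exact ⟨h v, dropLast_mem_classesAt_of_edge'' hprof hE⟩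

theorem ncard_classesAt_le_succ [Finite Q] (hprof : A.IsProfileFun w h) (i : ℕ) :
    (A.classesAt w h i).ncard ≤ (A.classesAt w h (i + 1)).ncard :=
  Set.ncard_le_ncard_of_subset_image (A.classesAt_finite w h _)
    (classesAt_subset_image_dropLast hprof i)

theorem eq_of_edge''_of_ncard_classesAt_succ_le [Finite Q] (hprof : A.IsProfileFun w h) {i : ℕ}
    (hwidth : (A.classesAt w h (i + 1)).ncard ≤ (A.classesAt w h i).ncard)
    {u u' v v' : Q × ℕ} (hu : u.2 = i) (hu' : u'.2 = i) (hh : h u = h u')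
    (hE : A.Edge'' w h u v) (hE' : A.Edge'' w h u' v') : h v = h v' := by
  have hinj := Set.injOn_of_subset_image_of_ncard_le (A.classesAt_finite w h _)
    (classesAt_subset_image_dropLast hprof i) hwidth
  obtain ⟨hv, hvu⟩ := dropLast_mem_classesAt_of_edge'' hprof hE
  obtain ⟨hv', hvu'⟩ := dropLast_mem_classesAt_of_edge'' hprof hE'
  rw [hu] at hv
  rw [hu'] at hv'
  exact hinj hv hv' (by rw [hvu, hvu', hh])

end NBW

/-- in `G''` the DAG of profile-equivalence classes is a leafless
tree of monotonically non-decreasing width bounded by `n`, and hence there is a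
stabilization level after which every class has exactly one child class. -/
theorem stmt8 {Q σ : Type} [Fintype Q] (A : NBW Q σ) (w : ℕ → σ) (h : Q × ℕ → List Bool)
    (hprof : A.IsProfileFun w h) :
    (∀ u, A.InDag'' w h u → ∃ v, A.Edge'' w h u v) ∧
    (∀ i : ℕ, Set.ncard {p : List Bool | ∃ u, A.InDag'' w h u ∧ u.2 = i ∧ h u = p} ≤
       Set.ncard {p : List Bool | ∃ u, A.InDag'' w h u ∧ u.2 = i + 1 ∧ h u = p}) ∧
    (∀ i : ℕ, Set.ncard {p : List Bool | ∃ u, A.InDag'' w h u ∧ u.2 = i ∧ h u = p} ≤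
       Fintype.card Q) ∧
    (∃ j : ℕ, ∀ u, A.InDag'' w h u → j ≤ u.2 →
      ∃ v, (∃ u', A.InDag'' w h u' ∧ u'.2 = u.2 ∧ h u' = h u ∧ A.Edge'' w h u' v) ∧
        ∀ v', (∃ u', A.InDag'' w h u' ∧ u'.2 = u.2 ∧ h u' = h u ∧ A.Edge'' w h u' v') →
          h v' = h v) := by
  have hmono : Monotone fun i => (A.classesAt w h i).ncard :=
    monotone_nat_of_le_succ (NBW.ncard_classesAt_le_succ hprof)
  obtain ⟨j, hj⟩ := Nat.exists_forall_ge_eq_of_monotone hmono (A.ncard_classesAt_le_card w h)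
  refine ⟨fun u => NBW.exists_edge''_of_inDag'', NBW.ncard_classesAt_le_succ hprof,
    A.ncard_classesAt_le_card w h, j, fun u hu hju => ?_⟩
  have hwidth : (A.classesAt w h (u.2 + 1)).ncard ≤ (A.classesAt w h u.2).ncard :=
    (hj _ (hju.trans u.2.le_succ)).trans_le (hj _ hju).ge
  obtain ⟨v, hE⟩ := NBW.exists_edge''_of_inDag'' hu
  refine ⟨v, ⟨u, hu, rfl, rfl, hE⟩, ?_⟩
  rintro v' ⟨u', -, hu', hh, hE'⟩
  exact NBW.eq_of_edge''_of_ncard_classesAt_succ_le hprof hwidth hu' rfl hh hE' hE
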